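/- Let G be a finite group acting on a set Ω, and let p be a prime dividing |G|. Suppose that every nontrivial p-subgroup of G has exactly one fixed point in Ω. Then any two points of Ω whose stabilizers in G have order divisible by p lie in the same G-orbit; in particular, the set of points of Ω with stabilizer of order divisible by p is nonempty and forms a single G-orbit. (Abstract version of the fact that the automorphism group of a zero p-rank curve has exactly one non-tame orbit.) -/

import Mathlib

/-!
Fix a Sylow `p`-subgroup `P` and its fixed point `ω₀`. If `p` divides the order of the stabilizer
of `ω`, Cauchy's theorem gives a nontrivial `p`-subgroup `Q` fixing `ω`; a Sylow subgroup `R ≥ Q`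
fixes some point, which is also fixed by `Q` and hence equals `ω`. Conjugating `R` onto `P` moves
`ω` to a fixed point of `P`, that is, to `ω₀`.
-/

open MulAction
open scoped Pointwise

theorem Subgroup.exists_isPGroup_ne_bot_le_of_dvd_card {G : Type*} [Group G] {p : ℕ}
    [Fact p.Prime] (H : Subgroup G) [Finite H] (hdvd : p ∣ Nat.card H) :
    ∃ Q : Subgroup G, IsPGroup p Q ∧ Q ≠ ⊥ ∧ Q ≤ H := by
  obtain ⟨x, hx⟩ := exists_prime_orderOf_dvd_card' p hdvd
  have hxG : orderOf (x : G) = p := (Subgroup.orderOf_coe x).trans hx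
  refine ⟨Subgroup.zpowers (x : G), ?_, ?_, Subgroup.zpowers_le.mpr x.2⟩
  · exact IsPGroup.of_card (n := 1) (by rw [Nat.card_zpowers, hxG, pow_one])
  · rw [Ne, Subgroup.zpowers_eq_bot]
    rintro hx1
    rw [hx1, orderOf_one] at hxG
    exact (Fact.out : p.Prime).one_lt.ne' hxG.symm

theorem Subgroup.conj_smul_le_stabilizer_smul {G Ω : Type*} [Group G] [MulAction G Ω]
    {H : Subgroup G} {ω : Ω} (h : H ≤ stabilizer G ω) (g : G) :
    MulAut.conj g • H ≤ stabilizer G (g • ω) := by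
  rw [stabilizer_smul_eq_stabilizer_map_conj]
  exact Subgroup.map_mono h

section UniqueFixedPoints

variable {G Ω : Type*} [Group G] [Finite G] [MulAction G Ω] {p : ℕ} [Fact p.Prime]

theorem exists_sylow_le_stabilizer
    (hfix : ∀ P : Subgroup G, IsPGroup p P → P ≠ ⊥ → ∃! ω : Ω, ∀ g ∈ P, g • ω = ω)
    {ω : Ω} (hω : p ∣ Nat.card (stabilizer G ω)) :
    ∃ R : Sylow p G, ↑R ≤ stabilizer G ω := by
  obtain ⟨Q, hQ, hne, hQω⟩ := (stabilizer G ω).exists_isPGroup_ne_bot_le_of_dvd_card hω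
  obtain ⟨R, hQR⟩ := hQ.exists_le_sylow
  obtain ⟨ωR, hRωR⟩ := (hfix R R.2 (ne_bot_of_gt (hne.bot_lt.trans_le hQR))).exists
  have hωR : ω = ωR := (hfix Q hQ hne).unique hQω (hQR.trans hRωR : Q ≤ stabilizer G ωR)
  exact ⟨R, hωR ▸ hRωR⟩

theorem mem_orbit_of_sylow_le_stabilizer
    (hfix : ∀ P : Subgroup G, IsPGroup p P → P ≠ ⊥ → ∃! ω : Ω, ∀ g ∈ P, g • ω = ω)
    (P : Sylow p G) {ω₀ : Ω} (hP : ↑P ≤ stabilizer G ω₀)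
    {ω : Ω} (hω : p ∣ Nat.card (stabilizer G ω)) : ω ∈ orbit G ω₀ := by
  obtain ⟨R, hR⟩ := exists_sylow_le_stabilizer hfix hω
  obtain ⟨g, rfl⟩ := exists_smul_eq G R P
  have hgR : ↑(g • R) ≤ stabilizer G (g • ω) := by
    rw [Sylow.coe_subgroup_smul]
    exact Subgroup.conj_smul_le_stabilizer_smul hR g
  have hpG : p ∣ Nat.card G := hω.trans (Subgroup.card_subgroup_dvd_card _)
  have hgω : g • ω = ω₀ :=
    (hfix _ (g • R).2 ((g • R).ne_bot_of_dvd_card hpG)).unique hgR hP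
  exact mem_orbit_symm.mp (hgω ▸ mem_orbit ω g)

end UniqueFixedPoints

/-- Abstract version of the fact that the automorphism group of a curve of zero `p`-rank
has exactly one non-tame orbit: if `G` is a finite group acting on a set `Ω`, `p` is a
prime dividing `|G|`, and every nontrivial `p`-subgroup of `G` has exactly one fixed
point in `Ω`, then the set of points of `Ω` whose stabilizer has order divisible by `p`
is nonempty, and any two such points lie in the same `G`-orbit. -/
theorem stmt12 (G : Type*) [Group G] [Finite G] (Ω : Type*) [MulAction G Ω]
    (p : ℕ) (hp : p.Prime) (hpG : p ∣ Nat.card G)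
    (hfix : ∀ P : Subgroup G, IsPGroup p P → P ≠ ⊥ → ∃! ω : Ω, ∀ g ∈ P, g • ω = ω) :
    (∃ ω : Ω, p ∣ Nat.card (MulAction.stabilizer G ω)) ∧
    ∀ ω₁ ω₂ : Ω, p ∣ Nat.card (MulAction.stabilizer G ω₁) →
      p ∣ Nat.card (MulAction.stabilizer G ω₂) → ω₁ ∈ MulAction.orbit G ω₂ := by
  have : Fact p.Prime := ⟨hp⟩
  obtain ⟨P⟩ : Nonempty (Sylow p G) := inferInstance
  obtain ⟨ω₀, hω₀⟩ := (hfix P P.2 (P.ne_bot_of_dvd_card hpG)).exists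
  have hP : ↑P ≤ stabilizer G ω₀ := hω₀
  refine ⟨⟨ω₀, (P.dvd_card_of_dvd_card hpG).trans (Subgroup.card_dvd_of_le hP)⟩, ?_⟩
  intro ω₁ ω₂ h₁ h₂
  rw [← orbit_eq_iff, orbit_eq_iff.mpr (mem_orbit_of_sylow_le_stabilizer hfix P hP h₁),
    orbit_eq_iff.mpr (mem_orbit_of_sylow_le_stabilizer hfix P hP h₂)]
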